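/- arXiv:2506.04638 — 2 statements merged into one kernel-verified Lean document; each statement's English description precedes it below -/
import Mathlib

section
/- Let Ω ⊆ ℂ² be open and let τ : ℤ → (Ω → ℂ) be a family of holomorphic nonvanishing functions satisfying the bilinear 2-dimensional Toda–Hirota equation τ_n·∂_x∂_y τ_n − (∂_x τ_n)(∂_y τ_n) = τ_{n+1}·τ_{n−1} on Ω for all n ∈ ℤ. Define s_{n+1} := (∂_y τ_n)/τ_n − (∂_y τ_{n+1})/τ_{n+1} and r_n := ( τ_n·∂_x∂_y τ_n − (∂_x τ_n)(∂_y τ_n) )/τ_n². Then for all n ∈ ℤ: (i) ∂_x s_{n+1} = r_n − r_{n+1}; (ii) ∂_y r_n = (s_n − s_{n+1})·r_n; (iii) r_n·∂_x∂_y r_n − (∂_x r_n)(∂_y r_n) = ( r_{n+1} − 2r_n + r_{n−1} )·r_n² (the bilinear form of the 2-dimensional Toda equation ∂_x∂_y log r_n = r_{n+1} − 2r_n + r_{n−1}). -/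
/-- Partial derivative with respect to the first coordinate of `ℂ × ℂ`. -/
noncomputable def dX (f : ℂ × ℂ → ℂ) : ℂ × ℂ → ℂ := fun z => fderiv ℂ f z (1, 0)

/-- Partial derivative with respect to the second coordinate of `ℂ × ℂ`. -/
noncomputable def dY (f : ℂ × ℂ → ℂ) : ℂ × ℂ → ℂ := fun z => fderiv ℂ f z (0, 1)

/-!
On `Ω` the Toda–Hirota equation says `r_n = τ_{n+1} τ_{n-1} / τ_n²`. With `q_n = ∂_y log τ_n`
we have `s_{n+1} = q_n - q_{n+1}` and `∂_x q_n = r_n`, which is (i). Taking `∂_y log` of the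
quotient gives `∂_y log r_n = q_{n+1} + q_{n-1} - 2 q_n = s_n - s_{n+1}`, which is (ii).
Applying `∂_x` to (ii) and using (i) twice yields
`∂_x∂_y log r_n = (r_{n-1} - r_n) - (r_n - r_{n+1})`, which is (iii).
-/

open Set

section DirectionalDerivative

variable {𝕜 E : Type*} [NontriviallyNormedField 𝕜] [NormedAddCommGroup E] [NormedSpace 𝕜 E]
  {f g h : E → 𝕜} {z v : E}

theorem fderiv_apply_fun_sub (hf : DifferentiableAt 𝕜 f z) (hg : DifferentiableAt 𝕜 g z) :
    fderiv 𝕜 (fun w => f w - g w) z v = fderiv 𝕜 f z v - fderiv 𝕜 g z v := by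
  rw [fderiv_fun_sub hf hg, sub_apply]

theorem fderiv_apply_fun_mul (hf : DifferentiableAt 𝕜 f z) (hg : DifferentiableAt 𝕜 g z) :
    fderiv 𝕜 (fun w => f w * g w) z v = fderiv 𝕜 f z v * g z + f z * fderiv 𝕜 g z v := by
  rw [fderiv_fun_mul hf hg]
  simp only [add_apply, smul_apply, smul_eq_mul]
  ring

theorem fderiv_apply_fun_div (hf : DifferentiableAt 𝕜 f z) (hg : DifferentiableAt 𝕜 g z)
    (hg0 : g z ≠ 0) :
    fderiv 𝕜 (fun w => f w / g w) z v
      = (fderiv 𝕜 f z v * g z - f z * fderiv 𝕜 g z v) / g z ^ 2 := by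
  have hinv : HasFDerivAt (fun w => (g w)⁻¹) ((-(g z ^ 2)⁻¹) • fderiv 𝕜 g z) z :=
    (hasDerivAt_inv hg0).comp_hasFDerivAt z hg.hasFDerivAt
  simp only [div_eq_mul_inv]
  rw [(hf.hasFDerivAt.fun_mul hinv).fderiv]
  simp only [add_apply, smul_apply, smul_eq_mul]
  field_simp
  ring

theorem fderiv_apply_mul_div_sq (hf : DifferentiableAt 𝕜 f z) (hg : DifferentiableAt 𝕜 g z)
    (hh : DifferentiableAt 𝕜 h z) (hf0 : f z ≠ 0) (hg0 : g z ≠ 0) (hh0 : h z ≠ 0) :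
    fderiv 𝕜 (fun w => f w * g w / h w ^ 2) z v
      = (fderiv 𝕜 f z v / f z + fderiv 𝕜 g z v / g z - 2 * (fderiv 𝕜 h z v / h z))
          * (f z * g z / h z ^ 2) := by
  simp only [sq]
  rw [fderiv_apply_fun_div (f := fun w => f w * g w) (g := fun w => h w * h w) (hf.mul hg)
      (hh.mul hh) (mul_ne_zero hh0 hh0), fderiv_apply_fun_mul hf hg, fderiv_apply_fun_mul hh hh]
  field_simp
  ring

theorem AnalyticAt.fderiv_apply [CompleteSpace 𝕜] (hf : AnalyticAt 𝕜 f z) (v : E) :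
    AnalyticAt 𝕜 (fun w => fderiv 𝕜 f w v) z :=
  ((ContinuousLinearMap.apply 𝕜 𝕜 v).analyticAt _).comp hf.fderiv

end DirectionalDerivative

section PartialDerivatives

variable {f g a r : ℂ × ℂ → ℂ} {Ω : Set (ℂ × ℂ)} {z : ℂ × ℂ}

theorem AnalyticAt.dX (hf : AnalyticAt ℂ f z) : AnalyticAt ℂ (dX f) z := hf.fderiv_apply _

theorem AnalyticAt.dY (hf : AnalyticAt ℂ f z) : AnalyticAt ℂ (dY f) z := hf.fderiv_apply _

theorem Set.EqOn.dX (hΩ : IsOpen Ω) (h : EqOn f g Ω) : EqOn (dX f) (dX g) Ω := fun _ hz => by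
  rw [_root_.dX, _root_.dX, (h.eventuallyEq_of_mem (hΩ.mem_nhds hz)).fderiv_eq]

theorem Set.EqOn.dY (hΩ : IsOpen Ω) (h : EqOn f g Ω) : EqOn (dY f) (dY g) Ω := fun _ hz => by
  rw [_root_.dY, _root_.dY, (h.eventuallyEq_of_mem (hΩ.mem_nhds hz)).fderiv_eq]

theorem dX_sub (hf : DifferentiableAt ℂ f z) (hg : DifferentiableAt ℂ g z) :
    dX (fun w => f w - g w) z = dX f z - dX g z :=
  fderiv_apply_fun_sub hf hg

theorem dX_mul (hf : DifferentiableAt ℂ f z) (hg : DifferentiableAt ℂ g z) :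
    dX (fun w => f w * g w) z = dX f z * g z + f z * dX g z :=
  fderiv_apply_fun_mul hf hg

/-- Half the Hirota derivative `D_x D_y f·f`, i.e. `f² ∂_x∂_y log f`. -/
noncomputable def hirotaXY (f : ℂ × ℂ → ℂ) : ℂ × ℂ → ℂ :=
  fun z => f z * dX (dY f) z - dX f z * dY f z

theorem AnalyticAt.hirotaXY (hf : AnalyticAt ℂ f z) : AnalyticAt ℂ (hirotaXY f) z :=
  (hf.mul hf.dY.dX).sub (hf.dX.mul hf.dY)

theorem dX_dY_div_self (hf : AnalyticAt ℂ f z) (hf0 : f z ≠ 0) :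
    dX (fun w => dY f w / f w) z = hirotaXY f z / f z ^ 2 := by
  simp only [hirotaXY, _root_.dX]
  rw [fderiv_apply_fun_div hf.dY.differentiableAt hf.differentiableAt hf0]
  ring

theorem hirotaXY_eq_of_eqOn_dY (hΩ : IsOpen Ω) (hz : z ∈ Ω) (ha : DifferentiableAt ℂ a z)
    (hr : DifferentiableAt ℂ r z) (h : EqOn (dY r) (fun w => a w * r w) Ω) :
    hirotaXY r z = dX a z * r z ^ 2 := by
  have hdX : dX (dY r) z = dX a z * r z + a z * dX r z := by
    rw [h.dX hΩ hz, dX_mul ha hr]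
  simp only [hirotaXY, hdX, h hz]
  ring

end PartialDerivatives

/-- Proposition 2.9: if `τ_n` solves the bilinear 2-dimensional Toda–Hirota equation, then
`s_{n+1} = ∂_y log(τ_n/τ_{n+1})` and `r_n = ∂ₓ∂_y log τ_n` (in bilinear form) satisfy
(i) `∂ₓs_{n+1} = r_n − r_{n+1}`, (ii) `∂_y log r_n = s_n − s_{n+1}`, and
(iii) `r_n` solves the 2-dimensional Toda equation `∂ₓ∂_y log r_n = r_{n+1} − 2r_n + r_{n−1}`
in bilinear form. -/
theorem stmt_4 (Ω : Set (ℂ × ℂ)) (hΩ : IsOpen Ω)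
    (τ : ℤ → ℂ × ℂ → ℂ)
    (hτ : ∀ n : ℤ, AnalyticOnNhd ℂ (τ n) Ω)
    (hτne : ∀ n : ℤ, ∀ z ∈ Ω, τ n z ≠ 0)
    (hTHE : ∀ n : ℤ, ∀ z ∈ Ω,
      τ n z * dX (dY (τ n)) z - dX (τ n) z * dY (τ n) z = τ (n+1) z * τ (n-1) z)
    (s r : ℤ → ℂ × ℂ → ℂ)
    (hs : ∀ n : ℤ, s (n+1)
      = fun z => dY (τ n) z / τ n z - dY (τ (n+1)) z / τ (n+1) z)
    (hr : ∀ n : ℤ, r n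
      = fun z => (τ n z * dX (dY (τ n)) z - dX (τ n) z * dY (τ n) z) / (τ n z)^2) :
    ∀ n : ℤ, ∀ z ∈ Ω,
      dX (s (n+1)) z = r n z - r (n+1) z ∧
      dY (r n) z = (s n z - s (n+1) z) * r n z ∧
      r n z * dX (dY (r n)) z - dX (r n) z * dY (r n) z
        = (r (n+1) z - 2 * r n z + r (n-1) z) * (r n z)^2 := by
  intro n z hz
  have hq : ∀ k, ∀ w ∈ Ω, AnalyticAt ℂ (fun u => dY (τ k) u / τ k u) w :=
    fun k w hw => (hτ k w hw).dY.div (hτ k w hw) (hτne k w hw)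
  have hs_prev : ∀ k, s k = fun w => dY (τ (k-1)) w / τ (k-1) w - dY (τ k) w / τ k w :=
    fun k => by simpa only [sub_add_cancel] using hs (k - 1)
  have hsd : ∀ k, ∀ w ∈ Ω, DifferentiableAt ℂ (s k) w := fun k w hw => by
    rw [hs_prev k]
    exact ((hq (k-1) w hw).sub (hq k w hw)).differentiableAt
  have hrd : DifferentiableAt ℂ (r n) z := by
    rw [hr n]
    exact ((hτ n z hz).hirotaXY.div ((hτ n z hz).pow 2)
      (pow_ne_zero _ (hτne n z hz))).differentiableAt
  have hdXs : ∀ k, ∀ w ∈ Ω, dX (s (k+1)) w = r k w - r (k+1) w := fun k w hw => by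
    rw [hs k, dX_sub (hq k w hw).differentiableAt (hq (k+1) w hw).differentiableAt,
      dX_dY_div_self (hτ k w hw) (hτne k w hw),
      dX_dY_div_self (hτ (k+1) w hw) (hτne (k+1) w hw), hr k, hr (k+1)]
    rfl
  have hrτ : ∀ k, EqOn (r k) (fun w => τ (k+1) w * τ (k-1) w / τ k w ^ 2) Ω :=
    fun k w hw => by simpa only [hr k] using congrArg (· / τ k w ^ 2) (hTHE k w hw)
  have hdYr : EqOn (dY (r n)) (fun w => (s n w - s (n+1) w) * r n w) Ω := fun w hw => by
    beta_reduce
    rw [(hrτ n).dY hΩ hw, hrτ n hw, hs_prev n, hs n]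
    exact (fderiv_apply_mul_div_sq (hτ (n+1) w hw).differentiableAt
      (hτ (n-1) w hw).differentiableAt (hτ n w hw).differentiableAt
      (hτne (n+1) w hw) (hτne (n-1) w hw) (hτne n w hw)).trans (by unfold dY; ring)
  refine ⟨hdXs n z hz, hdYr hz, ?_⟩
  have hdXs' : dX (s n) z = r (n-1) z - r n z := by
    simpa only [sub_add_cancel] using hdXs (n-1) z hz
  calc hirotaXY (r n) z = dX (fun w => s n w - s (n+1) w) z * r n z ^ 2 :=
        hirotaXY_eq_of_eqOn_dY hΩ hz ((hsd n z hz).sub (hsd (n+1) z hz)) hrd hdYr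
    _ = _ := by
      rw [dX_sub (hsd n z hz) (hsd (n+1) z hz), hdXs', hdXs n z hz]
      ring
end

section
/- Let N ≥ 2, α ∈ ℂ^N, let Ω ⊆ {x ∈ ℂ^N : x_a ≠ x_b for all a ≠ b} be open, and u : Ω → ℂ holomorphic (three times differentiable). Fix distinct 1 ≤ p, q ≤ N. Then on Ω: (x_p − x_q)²·M_{p,q}(α + e_p − e_q)( L_{p,q}(α)u ) = L_{p,q}(α)( (x_p − x_q)²·M_{p,q}(α)u ), where M_{p,q}(α+e_p−e_q)w = ∂_p∂_q w + ((α_q−1)/(x_p−x_q))∂_p w + ((α_p+1)/(x_q−x_p))∂_q w, L_{p,q}(α)w = (x_p−x_q)∂_q w + α_q w, and on the right-hand side L_{p,q}(α) is applied to the function x ↦ (x_p−x_q)²·M_{p,q}(α)u(x). -/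
/-- Partial derivative of a function on `ℂ^N` with respect to the `p`-th coordinate. -/
noncomputable def pder {N : ℕ} (p : Fin N) (f : (Fin N → ℂ) → ℂ) : (Fin N → ℂ) → ℂ :=
  fun x => fderiv ℂ f x (Pi.single p (1 : ℂ))

/-- The Euler–Poisson–Darboux operator
`M_{p,q}(α) = ∂_p∂_q + (α_q/(x_p−x_q))∂_p + (α_p/(x_q−x_p))∂_q`. -/
noncomputable def Mop {N : ℕ} (α : Fin N → ℂ) (p q : Fin N) (f : (Fin N → ℂ) → ℂ) :
    (Fin N → ℂ) → ℂ :=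
  fun x => pder p (pder q f) x + (α q / (x p - x q)) * pder p f x
    + (α p / (x q - x p)) * pder q f x

/-- The contiguity operator `L_{p,q}(α) = (x_p − x_q)∂_q + α_q`. -/
noncomputable def Lop {N : ℕ} (α : Fin N → ℂ) (p q : Fin N) (f : (Fin N → ℂ) → ℂ) :
    (Fin N → ℂ) → ℂ :=
  fun x => (x p - x q) * pder q f x + α q * f x

/-!
`M_{p,q}(α)` has poles on the diagonal, but `(x_p - x_q)² M_{p,q}(α)` is a polynomial differential
operator, identically so because `c² (a / c) = c a` holds also for `c = 0` (where `a / 0 = 0`).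
Both sides therefore expand without division. The expansion uses the commutation rule
`∂_q L_{p,q}(α) = L_{p,q}(α - e_q) ∂_q` and the symmetry of second derivatives of analytic
functions; the two sides then agree as polynomials in `x_p - x_q`, `α` and the derivatives of `u`.
-/

open Filter Topology

section PartialDerivative

variable {N : ℕ} {f g : (Fin N → ℂ) → ℂ} {x : Fin N → ℂ}

lemma AnalyticAt.pder (hf : AnalyticAt ℂ f x) (i : Fin N) : AnalyticAt ℂ (pder i f) x := by
  exact ((ContinuousLinearMap.apply ℂ ℂ (Pi.single i 1)).analyticAt _).comp hf.fderiv

lemma pder_eq_of_eventuallyEq (h : f =ᶠ[𝓝 x] g) (i : Fin N) : pder i f x = pder i g x := by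
  simp only [pder, h.fderiv_eq]

lemma pder_add (hf : DifferentiableAt ℂ f x) (hg : DifferentiableAt ℂ g x) (i : Fin N) :
    pder i (fun y => f y + g y) x = pder i f x + pder i g x := by
  simp [pder, fderiv_fun_add hf hg]

lemma pder_sub (hf : DifferentiableAt ℂ f x) (hg : DifferentiableAt ℂ g x) (i : Fin N) :
    pder i (fun y => f y - g y) x = pder i f x - pder i g x := by
  simp [pder, fderiv_fun_sub hf hg]

lemma pder_const_mul (hf : DifferentiableAt ℂ f x) (c : ℂ) (i : Fin N) :
    pder i (fun y => c * f y) x = c * pder i f x := by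
  simp [pder, fderiv_const_mul hf]

lemma pder_mul (hf : DifferentiableAt ℂ f x) (hg : DifferentiableAt ℂ g x) (i : Fin N) :
    pder i (fun y => f y * g y) x = pder i f x * g x + f x * pder i g x := by
  simp only [pder, fderiv_fun_mul hf hg, add_apply, smul_apply, smul_eq_mul]
  ring

lemma differentiableAt_apply_sub_apply (p q : Fin N) :
    DifferentiableAt ℂ (fun y : Fin N → ℂ => y p - y q) x := by
  fun_prop

lemma pder_apply_sub_apply (i p q : Fin N) :
    pder i (fun y : Fin N → ℂ => y p - y q) x
      = (Pi.single i 1 : Fin N → ℂ) p - (Pi.single i 1 : Fin N → ℂ) q := by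
  have hp := (ContinuousLinearMap.proj p : (Fin N → ℂ) →L[ℂ] ℂ).hasFDerivAt (x := x)
  have hq := (ContinuousLinearMap.proj q : (Fin N → ℂ) →L[ℂ] ℂ).hasFDerivAt (x := x)
  have h := (hp.fun_sub hq).fderiv
  simp only [ContinuousLinearMap.proj_apply] at h
  simp [pder, h]

lemma pder_comm (hf : AnalyticAt ℂ f x) (i j : Fin N) :
    pder i (pder j f) x = pder j (pder i f) x := by
  have hs : IsSymmSndFDerivAt ℂ f x :=
    (hf.contDiffAt (n := 2)).isSymmSndFDerivAt (by simp [minSmoothness_of_isRCLikeNormedField])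
  have hd : DifferentiableAt ℂ (fderiv ℂ f) x := hf.fderiv.differentiableAt
  have hcurry (v w : Fin N → ℂ) :
      fderiv ℂ (fun y => fderiv ℂ f y w) x v = fderiv ℂ (fderiv ℂ f) x v w := by
    simp [fderiv_clm_apply hd (differentiableAt_const w)]
  change fderiv ℂ (fun y => fderiv ℂ f y _) x _ = fderiv ℂ (fun y => fderiv ℂ f y _) x _
  rw [hcurry, hcurry]
  exact hs _ _

end PartialDerivative

section Operators

variable {N : ℕ} {f : (Fin N → ℂ) → ℂ} {x : Fin N → ℂ} {p q : Fin N}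

lemma pder_Lop (hf : DifferentiableAt ℂ f x) (hfq : DifferentiableAt ℂ (pder q f) x)
    (α : Fin N → ℂ) (i : Fin N) :
    pder i (Lop α p q f) x
      = ((Pi.single i 1 : Fin N → ℂ) p - (Pi.single i 1 : Fin N → ℂ) q) * pder q f x
        + (x p - x q) * pder i (pder q f) x + α q * pder i f x := by
  have hc := differentiableAt_apply_sub_apply (x := x) p q
  unfold Lop
  rw [pder_add (hc.fun_mul hfq) (hf.const_mul _), pder_mul hc hfq, pder_const_mul hf,
    pder_apply_sub_apply]

lemma pder_Lop_self (hf : AnalyticAt ℂ f x) (hpq : p ≠ q) (α : Fin N → ℂ) :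
    pder q (Lop α p q f) x = Lop (α - Pi.single q 1) p q (pder q f) x := by
  rw [pder_Lop hf.differentiableAt (hf.pder q).differentiableAt]
  simp only [Lop, Pi.sub_apply, Pi.single_eq_same, Pi.single_eq_of_ne hpq]
  ring

lemma sq_mul_Mop (α : Fin N → ℂ) (p q : Fin N) (f : (Fin N → ℂ) → ℂ) (y : Fin N → ℂ) :
    (y p - y q) ^ 2 * Mop α p q f y
      = (y p - y q) * ((y p - y q) * pder p (pder q f) y
          + (α q * pder p f y - α p * pder q f y)) := by
  rcases eq_or_ne (y p - y q) 0 with hc | hc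
  · simp [hc]
  · have hc' : y q - y p ≠ 0 := by rwa [← neg_sub, neg_ne_zero]
    simp only [Mop]
    field_simp
    ring

lemma pder_sq_mul_Mop (hf : AnalyticAt ℂ f x) (α : Fin N → ℂ) (i : Fin N) :
    pder i (fun y => (y p - y q) ^ 2 * Mop α p q f y) x
      = ((Pi.single i 1 : Fin N → ℂ) p - (Pi.single i 1 : Fin N → ℂ) q)
          * (2 * (x p - x q) * pder p (pder q f) x + (α q * pder p f x - α p * pder q f x))
        + (x p - x q) * ((x p - x q) * pder i (pder p (pder q f)) x
          + (α q * pder i (pder p f) x - α p * pder i (pder q f) x)) := by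
  have hc := differentiableAt_apply_sub_apply (x := x) p q
  have hfp := (hf.pder p).differentiableAt
  have hfq := (hf.pder q).differentiableAt
  have hfpq := ((hf.pder q).pder p).differentiableAt
  simp only [sq_mul_Mop]
  rw [pder_mul hc (by fun_prop), pder_add (hc.fun_mul hfpq) (by fun_prop), pder_mul hc hfpq,
    pder_sub (hfp.const_mul _) (hfq.const_mul _), pder_const_mul hfp, pder_const_mul hfq,
    pder_apply_sub_apply]
  ring

theorem sq_mul_Mop_Lop (hf : AnalyticAt ℂ f x) (hpq : p ≠ q) (α : Fin N → ℂ) :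
    (x p - x q) ^ 2 * Mop (α + Pi.single p 1 - Pi.single q 1) p q (Lop α p q f) x
      = Lop α p q (fun y => (y p - y q) ^ 2 * Mop α p q f y) x := by
  have hLq : pder q (Lop α p q f) =ᶠ[𝓝 x] Lop (α - Pi.single q 1) p q (pder q f) := by
    filter_upwards [hf.eventually_analyticAt] with y hy using pder_Lop_self hy hpq α
  have hq := hf.pder q
  rw [sq_mul_Mop, pder_eq_of_eventuallyEq hLq, pder_Lop_self hf hpq,
    pder_Lop hq.differentiableAt (hq.pder q).differentiableAt,
    pder_Lop hf.differentiableAt hq.differentiableAt]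
  conv_rhs => rw [Lop, pder_sq_mul_Mop hf, sq_mul_Mop, pder_comm hf q p, pder_comm hq q p]
  simp only [Lop, Pi.add_apply, Pi.sub_apply, Pi.single_eq_same, Pi.single_eq_of_ne hpq,
    Pi.single_eq_of_ne hpq.symm]
  ring

end Operators

theorem stmt_15_general {N : ℕ} (α : Fin N → ℂ)
    (Ω : Set (Fin N → ℂ))
    (u : (Fin N → ℂ) → ℂ) (hu : AnalyticOnNhd ℂ u Ω)
    (p q : Fin N) (hpq : p ≠ q) :
    ∀ x ∈ Ω,
      (x p - x q)^2 * Mop (α + Pi.single p 1 - Pi.single q 1) p q (Lop α p q u) x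
        = Lop α p q (fun y => (y p - y q)^2 * Mop α p q u y) x :=
  fun _ hx => sq_mul_Mop_Lop (hu _ hx) hpq α

/-- Lemma 4.4 (the intertwining relation):
`(x_p − x_q)²·M_{p,q}(α+e_p−e_q)(L_{p,q}(α)u) = L_{p,q}(α)((x_p − x_q)²·M_{p,q}(α)u)`. -/
theorem stmt_15 {N : ℕ} (hN : 2 ≤ N) (α : Fin N → ℂ)
    (Ω : Set (Fin N → ℂ)) (hΩ : IsOpen Ω)
    (hΩsub : Ω ⊆ {x | ∀ a b : Fin N, a ≠ b → x a ≠ x b})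
    (u : (Fin N → ℂ) → ℂ) (hu : AnalyticOnNhd ℂ u Ω)
    (p q : Fin N) (hpq : p ≠ q) :
    ∀ x ∈ Ω,
      (x p - x q)^2 * Mop (α + Pi.single p 1 - Pi.single q 1) p q (Lop α p q u) x
        = Lop α p q (fun y => (y p - y q)^2 * Mop α p q u y) x :=
  stmt_15_general α Ω u hu p q hpq
end
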